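/- arXiv:2312.06257 — 11 statements merged into one kernel-verified Lean document; each statement's English description precedes it below -/
import Mathlib

section
/- Let R be a ring, let m, n be positive integers, and let a ∈ R. If there exists an idempotent e ∈ a^m R a^n such that a^n (1 - e) a^m is nilpotent, then there exists an idempotent f ∈ a^n R a^m such that a^m (1 - f) a^n is nilpotent (left-right symmetry of (m,n)-regular nil cleanness). -/
/-! Only the commutation of `u = a ^ m` and `v = a ^ n` matters. With `b = v u`, idempotency of
`e = u r v` gives `b r b r b = b r b`. Hence `x = v r u` satisfies `x ^ 4 = x ^ 3`, so `f = x ^ 3`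
is an idempotent of `v R u`, and both `u (1 - f) v` and `v (1 - e) u` equal `b - b r b`. -/

theorem isIdempotentElem_pow_of_pow_succ_eq {M : Type*} [Monoid M] {x : M} {k : ℕ}
    (h : x ^ (k + 1) = x ^ k) : IsIdempotentElem (x ^ k) := by
  have hstable : ∀ j, x ^ (k + j) = x ^ k := by
    intro j
    induction j with
    | zero => rfl
    | succ j ih => rw [← add_assoc, pow_succ, ih, ← pow_succ, h]
  exact (pow_add x k k).symm.trans (hstable k)

section Ring

variable {R : Type*} [Ring R]

theorem IsIdempotentElem.mul_swap_mul_swap_mul_swap {u r v : R}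
    (h : IsIdempotentElem (u * r * v)) :
    v * u * r * (v * u) * r * (v * u) = v * u * r * (v * u) :=
  calc v * u * r * (v * u) * r * (v * u)
      = v * (u * r * v * (u * r * v)) * u := by noncomm_ring
    _ = v * (u * r * v) * u := by rw [h.eq]
    _ = v * u * r * (v * u) := by noncomm_ring

theorem exists_isIdempotentElem_isNilpotent_of_commute {u v r : R} (huv : Commute u v)
    (he : IsIdempotentElem (u * r * v)) (hnil : IsNilpotent (v * (1 - u * r * v) * u)) :
    ∃ s : R, IsIdempotentElem (v * s * u) ∧ IsNilpotent (u * (1 - v * s * u) * v) := by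
  have hvu : ∀ y, u * (v * y) = v * (u * y) := fun y => by rw [← mul_assoc, huv.eq, mul_assoc]
  have hbrb : ∀ y, v * (u * (r * (v * (u * (r * (v * (u * y))))))) =
      v * (u * (r * (v * (u * y)))) := fun y => by
    simpa only [mul_assoc] using congrArg (· * y) he.mul_swap_mul_swap_mul_swap
  set x := v * r * u
  have hx3 : x ^ 3 = v * (r * (v * u) * r * (v * u) * r) * u := by
    simp only [x, pow_succ, pow_zero, one_mul, mul_assoc, hvu]
  have hx4 : x ^ 4 = x ^ 3 := by
    simp only [x, pow_succ, pow_zero, one_mul, mul_assoc, hvu, hbrb]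
  refine ⟨r * (v * u) * r * (v * u) * r, hx3 ▸ isIdempotentElem_pow_of_pow_succ_eq hx4, ?_⟩
  convert hnil using 1
  have hbrb₀ := he.mul_swap_mul_swap_mul_swap
  simp only [mul_assoc] at hbrb₀
  simp only [mul_sub, sub_mul, mul_one, mul_assoc, hvu, hbrb, huv.eq, hbrb₀]

end Ring

theorem stmt_0_general {R : Type*} [Ring R] (m n : ℕ) (a : R)
    (h : ∃ e r : R, e = a ^ m * r * a ^ n ∧ IsIdempotentElem e ∧
      IsNilpotent (a ^ n * (1 - e) * a ^ m)) :
    ∃ f r : R, f = a ^ n * r * a ^ m ∧ IsIdempotentElem f ∧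
      IsNilpotent (a ^ m * (1 - f) * a ^ n) := by
  obtain ⟨e, r, rfl, he, hnil⟩ := h
  obtain ⟨s, hf, hfnil⟩ :=
    exists_isIdempotentElem_isNilpotent_of_commute (Commute.pow_pow_self a m n) he hnil
  exact ⟨_, s, rfl, hf, hfnil⟩

theorem stmt_0 {R : Type*} [Ring R] (m n : ℕ) (hm : 0 < m) (hn : 0 < n) (a : R)
    (h : ∃ e r : R, e = a ^ m * r * a ^ n ∧ IsIdempotentElem e ∧
      IsNilpotent (a ^ n * (1 - e) * a ^ m)) :
    ∃ f r : R, f = a ^ n * r * a ^ m ∧ IsIdempotentElem f ∧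
      IsNilpotent (a ^ m * (1 - f) * a ^ n) :=
  stmt_0_general m n a h
end

section
/- If R is a regularly nil clean ring (for every a ∈ R there exists an idempotent e ∈ Ra with (1-e)a nilpotent), then for all positive integers m, n, R is (m,n)-regularly nil clean: for every a ∈ R there exists an idempotent f ∈ a^m R a^n such that a^m (1 - f) a^n is nilpotent. -/
private lemma nilp_swap {R : Type*} [Ring R] {x y : R} (h : IsNilpotent (x * y)) :
    IsNilpotent (y * x) := by
  obtain ⟨k, hk⟩ := h
  refine ⟨k + 1, ?_⟩
  have hpow : ∀ j : ℕ, (y * x) ^ (j + 1) = y * (x * y) ^ j * x := by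
    intro j
    induction j with
    | zero => simp [mul_assoc]
    | succ i ih =>
        rw [pow_succ, ih, pow_succ]
        noncomm_ring
  rw [hpow, hk, mul_zero, zero_mul]

theorem stmt_1 {R : Type*} [Ring R]
    (h : ∀ a : R, ∃ e r : R, e = r * a ∧ IsIdempotentElem e ∧ IsNilpotent ((1 - e) * a)) :
    ∀ m n : ℕ, 0 < m → 0 < n → ∀ a : R,
      ∃ f r : R, f = a ^ m * r * a ^ n ∧ IsIdempotentElem f ∧
        IsNilpotent (a ^ m * (1 - f) * a ^ n) := by
  intro m n _hm _hn a
  obtain ⟨e, r, he, hid, hnil⟩ := h (a ^ (m + n))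
  set b : R := a ^ (m + n) with hb
  -- basic power identities
  have hpow1 : a ^ m * a ^ n = b := by rw [hb, pow_add]
  have hpow2 : a ^ n * a ^ m = b := by rw [hb, add_comm m n, pow_add]
  -- the idempotent relation in right-associated form
  have key : r * b * (r * b) = r * b := by
    have := hid
    rw [he] at this
    exact this
  have key2 : ∀ x : R, r * (b * (r * (b * x))) = r * (b * x) := by
    intro x
    have h' := congrArg (fun t => t * x) key
    simpa [mul_assoc] using h'
  have key' : r * (b * (r * b)) = r * b := by simpa [mul_assoc] using key
  refine ⟨a ^ m * (r * b * r) * a ^ n, r * b * r, rfl, ?_, ?_⟩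
  · -- idempotence
    show a ^ m * (r * b * r) * a ^ n * (a ^ m * (r * b * r) * a ^ n)
        = a ^ m * (r * b * r) * a ^ n
    have hmid : ∀ x : R, a ^ n * (a ^ m * x) = b * x := by
      intro x
      rw [← mul_assoc, hpow2]
    simp only [mul_assoc]
    rw [hmid, key2, key2]
  · -- nilpotency
    set f : R := a ^ m * (r * b * r) * a ^ n with hf
    have hA : a ^ n * (1 - f) * a ^ m = b * (1 - e) := by
      have expand : a ^ n * (1 - f) * a ^ m = a ^ n * a ^ m - a ^ n * f * a ^ m := by
        noncomm_ring
      rw [expand, hpow2, he]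
      have hfa : a ^ n * f * a ^ m = b * (r * b) := by
        rw [hf]
        calc a ^ n * (a ^ m * (r * b * r) * a ^ n) * a ^ m
            = (a ^ n * a ^ m) * ((r * b * r) * (a ^ n * a ^ m)) := by
              simp only [mul_assoc]
          _ = b * (r * (b * (r * b))) := by rw [hpow2]; simp only [mul_assoc]
          _ = b * (r * b) := by rw [key']
      rw [hfa, mul_sub, mul_one]
    -- chain of swaps
    have h1 : IsNilpotent (b * (1 - e)) := by
      have := nilp_swap (x := 1 - e) (y := b) hnil
      exact this
    have h2 : IsNilpotent (a ^ n * (1 - f) * a ^ m) := by rw [hA]; exact h1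
    have h3 : IsNilpotent (a ^ m * (a ^ n * (1 - f))) := by
      have := nilp_swap (x := a ^ n * (1 - f)) (y := a ^ m) ?_
      · exact this
      · exact h2
    have h4 : IsNilpotent (a ^ n * (a ^ m * (1 - f))) := by
      have heq : a ^ n * (a ^ m * (1 - f)) = a ^ m * (a ^ n * (1 - f)) := by
        rw [← mul_assoc, ← mul_assoc, hpow1, hpow2]
      rw [heq]; exact h3
    have h5 : IsNilpotent (a ^ m * (1 - f) * a ^ n) := by
      exact nilp_swap (x := a ^ n) (y := a ^ m * (1 - f)) h4
    exact h5
end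

section
/- Let R be a reduced ring (no nonzero nilpotent elements) which is (m,n)-regularly nil clean for some non-negative integers m, n with (m,n) ≠ (0,0). Then R is von Neumann regular: for every a ∈ R there exists r ∈ R with a = a r a. -/
theorem stmt_4 {R : Type*} [Ring R] (hred : ∀ x : R, IsNilpotent x → x = 0)
    (m n : ℕ) (hmn : (m, n) ≠ (0, 0))
    (h : ∀ a : R, ∃ e r : R, e = a ^ m * r * a ^ n ∧ IsIdempotentElem e ∧
        IsNilpotent (a ^ m * (1 - e) * a ^ n)) :
    ∀ a : R, ∃ r : R, a = a * r * a := by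
  -- idempotents are central in a reduced ring
  have central : ∀ e : R, IsIdempotentElem e → ∀ x : R, e * x = x * e := by
    intro e he x
    have he' : e * e = e := he
    have h1 : e * x - e * x * e = 0 := by
      apply hred
      refine ⟨2, ?_⟩
      have hh : (e * x - e * x * e) ^ 2 =
          e * x * (e - e * e) * (x - x * e) := by noncomm_ring
      rw [hh, he', sub_self, mul_zero, zero_mul]
    have h2 : x * e - e * x * e = 0 := by
      apply hred
      refine ⟨2, ?_⟩
      have hh : (x * e - e * x * e) ^ 2 =
          (x - e * x) * (e - e * e) * (x * e) := by noncomm_ring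
      rw [hh, he', sub_self, mul_zero, zero_mul]
    rw [sub_eq_zero] at h1 h2
    rw [h1, h2]
  intro a
  obtain ⟨e, r, hdef, he, hnil⟩ := h a
  have h0 : a ^ m * (1 - e) * a ^ n = 0 := hred _ hnil
  have hc : ∀ x : R, e * x = x * e := central e he
  have hcomm : Commute a (1 - e) := by
    show a * (1 - e) = (1 - e) * a
    rw [mul_sub, sub_mul, mul_one, one_mul, hc a]
  have hf : IsIdempotentElem (1 - e) := he.one_sub
  obtain ⟨k, hk⟩ : ∃ k, m + n = k + 1 := by
    rcases Nat.eq_zero_or_pos (m + n) with h' | h'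
    · exact absurd (by omega : m = 0 ∧ n = 0) (by simpa [Prod.ext_iff] using hmn)
    · exact ⟨m + n - 1, by omega⟩
  have hpow : (a * (1 - e)) ^ (m + n) = 0 := by
    rw [hcomm.mul_pow, hk, hf.pow_succ_eq]
    have hcn : a ^ n * (1 - e) = (1 - e) * a ^ n := (hcomm.pow_left n).symm.eq.symm
    calc a ^ (k + 1) * (1 - e) = a ^ m * (a ^ n * (1 - e)) := by
          rw [← hk, pow_add, mul_assoc]
      _ = a ^ m * (1 - e) * a ^ n := by rw [hcn, ← mul_assoc]
      _ = 0 := h0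
  have hae : a * (1 - e) = 0 := hred _ ⟨m + n, hpow⟩
  have ha : a = a * e := by
    have h' : a * 1 - a * e = 0 := by rw [← mul_sub]; exact hae
    rw [mul_one] at h'
    exact (sub_eq_zero.mp h').symm.symm
  rcases Nat.eq_zero_or_pos n with hn | hn
  · -- n = 0, so m = k + 1
    have hm : m = k + 1 := by omega
    refine ⟨a ^ k * r, ?_⟩
    calc a = a * e := ha
      _ = e * a := (hc a).symm
      _ = a ^ m * r * a ^ n * a := by rw [hdef]
      _ = a * (a ^ k * r) * a := by
          rw [hm, hn, pow_zero, mul_one, pow_succ']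
          noncomm_ring
  · obtain ⟨j, hj⟩ : ∃ j, n = j + 1 := ⟨n - 1, by omega⟩
    refine ⟨a ^ m * r * a ^ j, ?_⟩
    calc a = a * e := ha
      _ = a * (a ^ m * r * a ^ n) := by rw [hdef]
      _ = a * (a ^ m * r * a ^ j) * a := by rw [hj, pow_succ]; noncomm_ring
end

section
/- Let R be an abelian ring (all idempotents central) which is (m,n)-regularly nil clean for some non-negative integers m, n with (m,n) ≠ (0,0). Then R is (p,q)-regularly nil clean for every pair of non-negative integers p, q. -/
/-- Power of a product with a central idempotent. -/
private lemma cpow {R : Type*} [Ring R] {f b : R} (hf : f * f = f)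
    (hc : ∀ x : R, f * x = x * f) (j : ℕ) : (f * b) ^ (j + 1) = f * b ^ (j + 1) := by
  induction j with
  | zero => simp
  | succ j ih =>
    calc (f * b) ^ (j + 1 + 1) = (f * b ^ (j + 1)) * (f * b) := by rw [pow_succ, ih]
    _ = f * ((b ^ (j + 1) * f) * b) := by simp only [mul_assoc]
    _ = f * ((f * b ^ (j + 1)) * b) := by rw [← hc]
    _ = (f * f) * (b ^ (j + 1) * b) := by simp only [mul_assoc]
    _ = f * b ^ (j + 1 + 1) := by rw [hf, ← pow_succ]

/-- Grow left powers: if `e = a^s * U` for a central idempotent `e`, then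
`e = a^((v+1)*s) * U^(v+1)`. -/
private lemma growL {R : Type*} [Ring R] {e U a : R} (s : ℕ)
    (hc : ∀ x : R, e * x = x * e) (he : e * e = e)
    (h1 : e = a ^ s * U) : ∀ v : ℕ, e = a ^ ((v + 1) * s) * U ^ (v + 1) := by
  intro v
  induction v with
  | zero => simpa using h1
  | succ v ih =>
    calc e = e * e := he.symm
    _ = e * (a ^ ((v + 1) * s) * U ^ (v + 1)) := by rw [← ih]
    _ = (e * a ^ ((v + 1) * s)) * U ^ (v + 1) := by rw [mul_assoc]
    _ = (a ^ ((v + 1) * s) * e) * U ^ (v + 1) := by rw [hc]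
    _ = (a ^ ((v + 1) * s) * (a ^ s * U)) * U ^ (v + 1) := by rw [← h1]
    _ = a ^ ((v + 1) * s + s) * (U * U ^ (v + 1)) := by
        rw [← mul_assoc, ← pow_add, mul_assoc]
    _ = a ^ ((v + 1 + 1) * s) * U ^ (v + 1 + 1) := by
        have hes : (v + 1) * s + s = (v + 1 + 1) * s := by ring
        rw [← pow_succ', hes]

/-- Grow right powers: if `e = U * a^s` for a central idempotent `e`, then
`e = U^(v+1) * a^((v+1)*s)`. -/
private lemma growR {R : Type*} [Ring R] {e U a : R} (s : ℕ)
    (hc : ∀ x : R, e * x = x * e) (he : e * e = e)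
    (h1 : e = U * a ^ s) : ∀ v : ℕ, e = U ^ (v + 1) * a ^ ((v + 1) * s) := by
  intro v
  induction v with
  | zero => simpa using h1
  | succ v ih =>
    calc e = e * e := he.symm
    _ = (U ^ (v + 1) * a ^ ((v + 1) * s)) * e := by rw [← ih]
    _ = U ^ (v + 1) * (a ^ ((v + 1) * s) * e) := by rw [mul_assoc]
    _ = U ^ (v + 1) * (e * a ^ ((v + 1) * s)) := by rw [hc]
    _ = U ^ (v + 1) * ((U * a ^ s) * a ^ ((v + 1) * s)) := by rw [← h1]
    _ = (U ^ (v + 1) * U) * a ^ (s + (v + 1) * s) := by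
        rw [mul_assoc, ← pow_add, ← mul_assoc]
    _ = U ^ (v + 1 + 1) * a ^ ((v + 1 + 1) * s) := by
        have hes : s + (v + 1) * s = (v + 1 + 1) * s := by ring
        rw [← pow_succ, hes]

/-- Convert a left factorization into a right one. -/
private lemma flipLR {R : Type*} [Ring R]
    (hab : ∀ e : R, IsIdempotentElem e → ∀ x : R, e * x = x * e)
    {e U a : R} {T : ℕ}
    (hL : e * a ^ T = a ^ T) (hR : a ^ T * e = a ^ T)
    (h1 : e = a ^ T * U) : e = U * a ^ T := by
  have hx2 : IsIdempotentElem (U * a ^ T) := by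
    show U * a ^ T * (U * a ^ T) = U * a ^ T
    calc U * a ^ T * (U * a ^ T) = U * (a ^ T * U * a ^ T) := by
          rw [mul_assoc, mul_assoc]
    _ = U * (e * a ^ T) := by rw [← h1]
    _ = U * a ^ T := by rw [hL]
  have hxc := hab _ hx2
  have h4 : (U * a ^ T) * e = U * a ^ T := by rw [mul_assoc, hR]
  have h5 : e * (U * a ^ T) = e := by
    calc e * (U * a ^ T) = a ^ T * (U * (U * a ^ T)) := by rw [h1, mul_assoc]
    _ = a ^ T * ((U * a ^ T) * U) := by rw [hxc U]
    _ = (a ^ T * U * a ^ T) * U := by rw [← mul_assoc, ← mul_assoc]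
    _ = (e * a ^ T) * U := by rw [← h1]
    _ = a ^ T * U := by rw [hL]
    _ = e := h1.symm
  calc e = e * (U * a ^ T) := h5.symm
  _ = (U * a ^ T) * e := (hxc e).symm
  _ = U * a ^ T := h4

/-- Convert a right factorization into a left one. -/
private lemma flipRL {R : Type*} [Ring R]
    (hab : ∀ e : R, IsIdempotentElem e → ∀ x : R, e * x = x * e)
    {e U a : R} {T : ℕ}
    (hL : e * a ^ T = a ^ T) (hR : a ^ T * e = a ^ T)
    (h1 : e = U * a ^ T) : e = a ^ T * U := by
  have hx2 : IsIdempotentElem (a ^ T * U) := by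
    show a ^ T * U * (a ^ T * U) = a ^ T * U
    calc a ^ T * U * (a ^ T * U) = a ^ T * (U * a ^ T) * U := by
          rw [mul_assoc, mul_assoc, mul_assoc]
    _ = a ^ T * e * U := by rw [← h1]
    _ = a ^ T * U := by rw [hR]
  have hxc := hab _ hx2
  have h4 : e * (a ^ T * U) = a ^ T * U := by rw [← mul_assoc, hL]
  have h5 : (a ^ T * U) * e = e := by
    calc (a ^ T * U) * e = ((a ^ T * U) * U) * a ^ T := by rw [h1, ← mul_assoc]
    _ = (U * (a ^ T * U)) * a ^ T := by rw [← hxc U]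
    _ = U * (a ^ T * (U * a ^ T)) := by rw [mul_assoc, mul_assoc]
    _ = U * (a ^ T * e) := by rw [← h1]
    _ = U * a ^ T := by rw [hR]
    _ = e := h1.symm
  calc e = (a ^ T * U) * e := h5.symm
  _ = e * (a ^ T * U) := hxc e
  _ = a ^ T * U := h4

theorem stmt_5 {R : Type*} [Ring R]
    (hab : ∀ e : R, IsIdempotentElem e → ∀ x : R, e * x = x * e)
    (m n : ℕ) (hmn : (m, n) ≠ (0, 0))
    (h : ∀ a : R, ∃ e r : R, e = a ^ m * r * a ^ n ∧ IsIdempotentElem e ∧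
        IsNilpotent (a ^ m * (1 - e) * a ^ n)) :
    ∀ p q : ℕ, ∀ a : R, ∃ e r : R, e = a ^ p * r * a ^ q ∧ IsIdempotentElem e ∧
        IsNilpotent (a ^ p * (1 - e) * a ^ q) := by
  have hk : 1 ≤ m + n := by
    rcases Nat.eq_zero_or_pos (m + n) with h0 | h0
    · exfalso; apply hmn
      have hm0 : m = 0 := by omega
      have hn0 : n = 0 := by omega
      rw [hm0, hn0]
    · exact h0
  intro p q a
  by_cases hpq0 : p = 0 ∧ q = 0
  · obtain ⟨hp, hq⟩ := hpq0
    subst hp; subst hq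
    exact ⟨1, 1, by simp, by simp [IsIdempotentElem], ⟨1, by simp⟩⟩
  · have hpq1 : 1 ≤ p + q := by omega
    obtain ⟨e, r, he, hid, N, hN⟩ := h a
    have hc := hab e hid
    have hfid : (1 - e) * (1 - e) = (1 - e) := hid.one_sub
    have hfc : ∀ x : R, (1 - e) * x = x * (1 - e) := hab _ hid.one_sub
    set k := m + n with hkdef
    set M := N + 1 with hMdef
    have hkM : 1 ≤ k * M := Nat.one_le_iff_ne_zero.mpr (by positivity)
    -- the nilpotent part, rewritten
    have hw : a ^ m * (1 - e) * a ^ n = (1 - e) * a ^ k := by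
      rw [← hfc (a ^ m), mul_assoc, ← pow_add]
    have hz : (1 - e) * a ^ (k * M) = 0 := by
      have h1 : (a ^ m * (1 - e) * a ^ n) ^ M = 0 := by
        rw [hMdef, pow_succ, hN, zero_mul]
      rw [hw, cpow hfid hfc N, ← hMdef, ← pow_mul] at h1
      exact h1
    -- absorption
    have habs : ∀ t : ℕ, k * M ≤ t → e * a ^ t = a ^ t ∧ a ^ t * e = a ^ t := by
      intro t ht
      have h1 : (1 - e) * a ^ t = 0 := by
        have : a ^ t = a ^ (k * M) * a ^ (t - k * M) := by
          rw [← pow_add]; congr 1; omega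
        rw [this, ← mul_assoc, hz, zero_mul]
      have h2 : e * a ^ t = a ^ t := by
        rw [sub_mul, one_mul, sub_eq_zero] at h1
        exact h1.symm
      exact ⟨h2, by rw [← hc, h2]⟩
    -- get a two-sided factorization with large T
    have main : ∃ (T : ℕ) (U : R), p ≤ T ∧ q ≤ T ∧ e = a ^ T * U ∧ e = U * a ^ T := by
      rcases Nat.eq_zero_or_pos m with hm0 | hm
      · -- m = 0, so n ≥ 1
        have hn : 1 ≤ n := by omega
        have h1 : e = r * a ^ n := by rw [he, hm0, pow_zero, one_mul]
        set V := max (max p q) (k * M) with hV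
        have h2 := growR n hc hid h1 V
        set T := (V + 1) * n with hT
        have hVT : V + 1 ≤ T := by
          calc V + 1 = (V + 1) * 1 := (mul_one _).symm
          _ ≤ (V + 1) * n := Nat.mul_le_mul_left _ hn
        have hTk : k * M ≤ T := by
          have := le_max_right (max p q) (k * M); omega
        obtain ⟨hL, hR⟩ := habs T hTk
        refine ⟨T, r ^ (V + 1), ?_, ?_, ?_, h2⟩
        · have := le_max_left (max p q) (k * M)
          have := le_max_left p q; omega
        · have := le_max_left (max p q) (k * M)
          have := le_max_right p q; omega
        · exact flipRL hab hL hR h2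
      · -- m ≥ 1
        have h1 : e = a ^ m * (r * a ^ n) := by rw [he, mul_assoc]
        set V := max (max p q) (k * M) with hV
        have h2 := growL m hc hid h1 V
        set T := (V + 1) * m with hT
        have hVT : V + 1 ≤ T := by
          calc V + 1 = (V + 1) * 1 := (mul_one _).symm
          _ ≤ (V + 1) * m := Nat.mul_le_mul_left _ hm
        have hTk : k * M ≤ T := by
          have := le_max_right (max p q) (k * M); omega
        obtain ⟨hL, hR⟩ := habs T hTk
        refine ⟨T, (r * a ^ n) ^ (V + 1), ?_, ?_, h2, ?_⟩
        · have := le_max_left (max p q) (k * M)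
          have := le_max_left p q; omega
        · have := le_max_left (max p q) (k * M)
          have := le_max_right p q; omega
        · exact flipLR hab hL hR h2
    obtain ⟨T, U, hTp, hTq, hLf, hRf⟩ := main
    refine ⟨e, a ^ (T - p) * (U * U) * a ^ (T - q), ?_, hid, ?_⟩
    · have e1 : a ^ p * a ^ (T - p) = a ^ T := by
        rw [← pow_add]; congr 1; omega
      have e2 : a ^ (T - q) * a ^ q = a ^ T := by
        rw [← pow_add]; congr 1; omega
      have e3 : a ^ p * (a ^ (T - p) * (U * U) * a ^ (T - q)) * a ^ q
          = (a ^ p * a ^ (T - p)) * (U * U) * (a ^ (T - q) * a ^ q) := by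
        simp only [mul_assoc]
      rw [e1, e2] at e3
      calc e = e * e := hid.symm
      _ = (a ^ T * U) * (U * a ^ T) := by rw [← hLf, ← hRf]
      _ = a ^ T * (U * U) * a ^ T := by simp only [mul_assoc]
      _ = a ^ p * (a ^ (T - p) * (U * U) * a ^ (T - q)) * a ^ q := e3.symm
    · refine ⟨k * M, ?_⟩
      have hw2 : a ^ p * (1 - e) * a ^ q = (1 - e) * a ^ (p + q) := by
        rw [← hfc (a ^ p), mul_assoc, ← pow_add]
      rw [hw2]
      have hE : k * M = (k * M - 1) + 1 := by omega
      rw [hE, cpow hfid hfc (k * M - 1), ← hE, ← pow_mul]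
      have : a ^ ((p + q) * (k * M)) = a ^ (k * M) * a ^ ((p + q) * (k * M) - k * M) := by
        rw [← pow_add]; congr 1
        have : k * M ≤ (p + q) * (k * M) := by
          calc k * M = 1 * (k * M) := (one_mul _).symm
          _ ≤ (p + q) * (k * M) := Nat.mul_le_mul_right _ hpq1
        omega
      rw [this, ← mul_assoc, hz, zero_mul]
end

section
/- Let R be an NI ring (the set of nilpotent elements forms a two-sided ideal) which is (m,n)-regularly nil clean for some non-negative integers m, n with (m,n) ≠ (0,0). Then R is (p,q)-regularly nil clean for every pair of non-negative integers p, q. -/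
/-!
Work modulo the nil ideal: `R ⧸ Nil(R)` is reduced, so its idempotents are central and it is
Dedekind-finite. There, if `e = a ^ m * r * a ^ n` is idempotent, `u = a * e + (1 - e)`
satisfies `u ^ m * (r * e + (1 - e)) * u ^ n = 1`, so `u` is a unit and
`e = a ^ p * (u⁻¹ ^ (p + q) * e) * a ^ q`; moreover `a ^ m * (1 - e) * a ^ n` equals
`(a * (1 - e)) ^ (m + n)` and vanishes, hence so does `a * (1 - e)`.
Back in `R`, `x = a ^ p * w * a ^ q` is idempotent modulo `Nil(R)`, and the usual lift
`1 - (1 - x ^ N) ^ N` of such an element lies in `x * R * x`.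
-/

open Finset

theorem isUnit_of_pow_mul_mul_pow_eq_one {M : Type*} [Monoid M] [IsDedekindFiniteMonoid M]
    {x y : M} {m n : ℕ} (hmn : m + n ≠ 0) (h : x ^ m * y * x ^ n = 1) : IsUnit x := by
  rcases Nat.eq_zero_or_eq_succ_pred m with hm | hm
  · obtain ⟨k, rfl⟩ := Nat.exists_eq_succ_of_ne_zero (by omega : n ≠ 0)
    rw [pow_succ, ← mul_assoc] at h
    exact .of_mul_eq_one_right _ h
  · rw [hm, pow_succ', mul_assoc, mul_assoc] at h
    exact .of_mul_eq_one _ h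

theorem IsIdempotentElem.pow_mul_mul_pow {M : Type*} [Monoid M] {f a : M}
    (hf : IsIdempotentElem f) (hfa : Commute a f) {k l : ℕ} (hkl : k + l ≠ 0) :
    a ^ k * f * a ^ l = (a * f) ^ (k + l) := by
  rw [mul_assoc, ← (hfa.pow_left l).eq, ← mul_assoc, ← pow_add, hfa.mul_pow, hf.pow_eq hkl]

section CentralIdempotent

variable {S : Type*} [Ring S] {e : S}

theorem IsIdempotentElem.mul_mul_mul_self (he : IsIdempotentElem e) {y : S} (hy : Commute e y)
    (x : S) : x * e * (y * e) = x * y * e := by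
  rw [mul_assoc x, ← mul_assoc e, hy.eq, mul_assoc y, he.eq, mul_assoc]

/-- Keeps the `e`-component of `x` and replaces its `(1 - e)`-component by `1`. -/
def IsIdempotentElem.mulAddOneSubHom (he : IsIdempotentElem e) (hc : ∀ x, Commute e x) :
    S →* S where
  toFun x := x * e + (1 - e)
  map_one' := by simp
  map_mul' x y := by
    have h₁ : e * (1 - e) = 0 := by rw [mul_sub, mul_one, he.eq, sub_self]
    have h₂ : (1 - e) * (y * e) = 0 := by
      rw [← (hc y).eq, ← mul_assoc, sub_mul, one_mul, he.eq, sub_self, zero_mul]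
    simp only [add_mul, mul_add, he.mul_mul_mul_self (hc y), mul_assoc x e, h₁, h₂, mul_zero,
      he.one_sub.eq, add_zero, zero_add]

variable (he : IsIdempotentElem e) (hc : ∀ x, Commute e x)
include he hc

theorem IsIdempotentElem.mulAddOneSubHom_self : he.mulAddOneSubHom hc e = 1 := by
  simp [mulAddOneSubHom, he.eq]

theorem IsIdempotentElem.mulAddOneSubHom_mul_self (x : S) :
    he.mulAddOneSubHom hc x * e = x * e := by
  simp [mulAddOneSubHom, add_mul, sub_mul, mul_assoc, he.eq]

end CentralIdempotent

section Reduced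

variable {S : Type*} [Ring S] [IsReduced S]

theorem IsIdempotentElem.commute_of_isReduced {e : S} (he : IsIdempotentElem e) (x : S) :
    Commute e x := by
  have hsq : (e * x * (1 - e)) ^ 2 = 0 ∧ ((1 - e) * x * e) ^ 2 = 0 := by
    constructor <;>
    · rw [sq]
      simp only [mul_assoc, mul_sub, sub_mul, mul_one, one_mul]
      simp only [← mul_assoc, he.eq]
      abel
  have h₁ := eq_zero_of_pow_eq_zero hsq.1
  have h₂ := eq_zero_of_pow_eq_zero hsq.2
  rw [mul_sub, mul_one, sub_eq_zero] at h₁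
  rw [sub_mul, one_mul, sub_mul, sub_eq_zero] at h₂
  exact h₁.trans (mul_assoc e x e ▸ h₂.symm)

instance IsReduced.isDedekindFiniteMonoid : IsDedekindFiniteMonoid S where
  mul_eq_one_symm {a b} hab := by
    have hba : IsIdempotentElem (b * a) := by
      rw [IsIdempotentElem, mul_assoc, ← mul_assoc a, hab, one_mul]
    have ha : (1 - b * a) * a = 0 := by
      rw [(hba.one_sub.commute_of_isReduced a).eq, mul_sub, mul_one, ← mul_assoc, hab, one_mul,
        sub_self]
    have := congrArg (· * b) ha
    simp only [mul_assoc, hab, mul_one, zero_mul] at this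
    exact (sub_eq_zero.mp this).symm

theorem IsReduced.exists_pow_mul_mul_pow_eq {m n : ℕ} (hmn : m + n ≠ 0) {a r : S}
    (he : IsIdempotentElem (a ^ m * r * a ^ n)) (p q : ℕ) :
    ∃ w, a ^ p * w * a ^ q = a ^ m * r * a ^ n := by
  set e := a ^ m * r * a ^ n with he_def
  have hc := he.commute_of_isReduced
  set φ := he.mulAddOneSubHom hc
  obtain ⟨u, hu⟩ : IsUnit (φ a) := by
    refine isUnit_of_pow_mul_mul_pow_eq_one hmn (y := φ r) ?_
    rw [← map_pow, ← map_pow, ← map_mul, ← map_mul, ← he_def, he.mulAddOneSubHom_self]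
  refine ⟨↑(u⁻¹ ^ (p + q)) * e, ?_⟩
  calc a ^ p * (↑(u⁻¹ ^ (p + q)) * e) * a ^ q
      = a ^ p * ↑(u⁻¹ ^ (p + q)) * a ^ q * e := by simp only [mul_assoc, (hc (a ^ q)).eq]
    _ = a ^ p * e * (↑(u⁻¹ ^ (p + q)) * e) * (a ^ q * e) := by
      rw [he.mul_mul_mul_self (hc _), he.mul_mul_mul_self (hc _)]
    _ = φ a ^ p * e * (↑(u⁻¹ ^ (p + q)) * e) * (φ a ^ q * e) := by
      rw [← map_pow, ← map_pow, he.mulAddOneSubHom_mul_self, he.mulAddOneSubHom_mul_self]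
    _ = ↑(u ^ p * u⁻¹ ^ (p + q) * u ^ q) * e := by
      rw [he.mul_mul_mul_self (hc _), he.mul_mul_mul_self (hc _), ← hu]
      push_cast
      rfl
    _ = e := by rw [show u ^ p * u⁻¹ ^ (p + q) * u ^ q = 1 by group, Units.val_one, one_mul]

theorem IsReduced.pow_mul_one_sub_mul_pow_eq_zero {e a : S} (he : IsIdempotentElem e)
    {m n p q : ℕ} (hmn : m + n ≠ 0) (hz : a ^ m * (1 - e) * a ^ n = 0) (hpq : p + q ≠ 0) :
    a ^ p * (1 - e) * a ^ q = 0 := by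
  have hca : Commute a (1 - e) := (he.one_sub.commute_of_isReduced a).symm
  have ha : a * (1 - e) = 0 :=
    eq_zero_of_pow_eq_zero ((he.one_sub.pow_mul_mul_pow hca hmn).symm.trans hz)
  rw [he.one_sub.pow_mul_mul_pow hca hpq, ha, zero_pow hpq]

end Reduced

theorem exists_isIdempotentElem_mul_mul_and_map_eq {R S : Type*} [Ring R] [Ring S] (f : R →+* S)
    {x : R} (hx : IsNilpotent (x - x ^ 2)) (hfx : IsIdempotentElem (f x)) :
    ∃ s, IsIdempotentElem (x * s * x) ∧ f (x * s * x) = f x := by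
  obtain ⟨k, hk⟩ := hx
  have hk' : (x - x ^ 2) ^ (k + 1) = 0 := by rw [pow_succ, hk, zero_mul]
  set g := ∑ i ∈ range (k + 1), (1 - x ^ (k + 1)) ^ i
  have hE := isIdempotentElem_one_sub_one_sub_pow_pow x (k + 1) hk'
  have hl : x ^ (k + 1) * g = 1 - (1 - x ^ (k + 1)) ^ (k + 1) := by
    simpa only [sub_sub_cancel] using mul_neg_geom_sum (1 - x ^ (k + 1)) (k + 1)
  have hr : g * x ^ (k + 1) = 1 - (1 - x ^ (k + 1)) ^ (k + 1) := by
    simpa only [sub_sub_cancel] using geom_sum_mul_neg (1 - x ^ (k + 1)) (k + 1)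
  -- The lift `E` equals `E * E = (x ^ (k + 1) * g) * (g * x ^ (k + 1))`, which lies in `x * R * x`.
  have hEx : 1 - (1 - x ^ (k + 1)) ^ (k + 1) = x * (x ^ k * g * g * x ^ k) * x := by
    rw [← hE.eq]
    nth_rw 1 [← hl]
    rw [← hr]
    nth_rw 1 [pow_succ']
    rw [pow_succ]
    simp only [mul_assoc]
  refine ⟨x ^ k * g * g * x ^ k, hEx ▸ hE, ?_⟩
  rw [← hEx, map_sub, map_one, map_pow, map_sub, map_one, map_pow, hfx.pow_succ_eq,
    hfx.one_sub.pow_succ_eq, sub_sub_cancel]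

theorem IsReduced.of_surjective {R S : Type*} [Ring R] [Ring S] {f : R →+* S}
    (hf : Function.Surjective f) (hker : ∀ x, f x = 0 ↔ IsNilpotent x) : IsReduced S where
  eq_zero y := by
    obtain ⟨x, rfl⟩ := hf y
    rintro ⟨k, hk⟩
    rw [← map_pow, hker] at hk
    exact (hker x).mpr hk.of_pow

def IsRegularlyNilClean {R : Type*} [Ring R] (m n : ℕ) (a : R) : Prop :=
  ∃ e r : R, e = a ^ m * r * a ^ n ∧ IsIdempotentElem e ∧
    IsNilpotent (a ^ m * (1 - e) * a ^ n)

theorem isRegularlyNilClean_zero_zero {R : Type*} [Ring R] (a : R) : IsRegularlyNilClean 0 0 a :=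
  ⟨1, 1, by simp, .one, by simp⟩

theorem IsRegularlyNilClean.of_surjective_isReduced {R S : Type*} [Ring R] [Ring S]
    [IsReduced S] (π : R →+* S) (hπ : Function.Surjective π)
    (hker : ∀ x, π x = 0 ↔ IsNilpotent x) {m n p q : ℕ} (hmn : m + n ≠ 0)
    (hpq : p + q ≠ 0) {a : R} (ha : IsRegularlyNilClean m n a) :
    IsRegularlyNilClean p q a := by
  obtain ⟨_, r, rfl, he, hz⟩ := ha
  have heπ : IsIdempotentElem (π a ^ m * π r * π a ^ n) := by simpa using he.map π
  obtain ⟨w, hw⟩ := IsReduced.exists_pow_mul_mul_pow_eq hmn heπ p q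
  obtain ⟨L, rfl⟩ := hπ w
  set x := a ^ p * L * a ^ q
  have hx : π x = π a ^ m * π r * π a ^ n := by
    simp only [x, map_mul, map_pow]
    exact hw
  obtain ⟨s, hs, hπs⟩ := exists_isIdempotentElem_mul_mul_and_map_eq π
    ((hker _).mp (by simp [hx, sq, heπ.eq])) (hx ▸ heπ)
  refine ⟨x * s * x, L * a ^ q * s * a ^ p * L, by simp only [x, mul_assoc], hs, (hker _).mp ?_⟩
  simp only [map_mul, map_sub, map_one, map_pow] at hπs ⊢
  rw [hπs, hx]
  refine IsReduced.pow_mul_one_sub_mul_pow_eq_zero heπ hmn ?_ hpq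
  simpa using (hker _).mpr hz

theorem stmt_6 {R : Type*} [Ring R]
    (hNI : ∃ I : TwoSidedIdeal R, ∀ x : R, x ∈ I ↔ IsNilpotent x)
    (m n : ℕ) (hmn : (m, n) ≠ (0, 0))
    (h : ∀ a : R, ∃ e r : R, e = a ^ m * r * a ^ n ∧ IsIdempotentElem e ∧
        IsNilpotent (a ^ m * (1 - e) * a ^ n)) :
    ∀ p q : ℕ, ∀ a : R, ∃ e r : R, e = a ^ p * r * a ^ q ∧ IsIdempotentElem e ∧
        IsNilpotent (a ^ p * (1 - e) * a ^ q) := by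
  obtain ⟨I, hI⟩ := hNI
  have hker : ∀ x, I.ringCon.mk' x = 0 ↔ IsNilpotent x := fun x => by
    rw [← hI, TwoSidedIdeal.mem_iff, ← RingCon.eq]
    rfl
  have := IsReduced.of_surjective I.ringCon.mk'_surjective hker
  have hmn' : m + n ≠ 0 := fun h0 => hmn (by simp_all)
  intro p q a
  rcases eq_or_ne (p + q) 0 with hpq | hpq
  · obtain ⟨rfl, rfl⟩ : p = 0 ∧ q = 0 := by omega
    exact isRegularlyNilClean_zero_zero a
  exact IsRegularlyNilClean.of_surjective_isReduced _ I.ringCon.mk'_surjective hker hmn' hpq (h a)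
end

section
/- Every centrally Utumi ring is strongly π-regular: if for every x ∈ R there exists y ∈ R with x - x^2 y both nilpotent and central, then for every x ∈ R there exist a positive integer m and r ∈ R such that x^m = x^{m+1} r. -/
theorem stmt_9 {R : Type*} [Ring R]
    (h : ∀ x : R, ∃ y : R, IsNilpotent (x - x ^ 2 * y) ∧ x - x ^ 2 * y ∈ Set.center R) :
    ∀ x : R, ∃ m : ℕ, 0 < m ∧ ∃ r : R, x ^ m = x ^ (m + 1) * r := by
  intro x
  obtain ⟨y, ⟨n, hn⟩, hc⟩ := h x
  rw [Set.mem_center_iff] at hc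
  set c := x - x ^ 2 * y with hcdef
  have hcx : x * (1 - x * y) = c := by
    rw [hcdef]; noncomm_ring
  have key : ∀ k, c ^ k = x ^ k * (1 - x * y) ^ k := by
    intro k
    induction k with
    | zero => simp
    | succ k ih =>
      calc c ^ (k + 1) = c ^ k * c := pow_succ c k
        _ = x ^ k * ((1 - x * y) ^ k * c) := by rw [ih, mul_assoc]
        _ = x ^ k * (c * (1 - x * y) ^ k) := by rw [← hc.comm ((1 - x * y) ^ k)]
        _ = x ^ k * (x * (1 - x * y) * (1 - x * y) ^ k) := by rw [hcx]
        _ = x ^ (k + 1) * (1 - x * y) ^ (k + 1) := by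
            rw [pow_succ x k, pow_succ' (1 - x * y) k, mul_assoc, mul_assoc]
  set u := 1 - x * y with hu
  set S := ∑ i ∈ Finset.range (n + 1), u ^ i with hS
  have hgeom : (u - 1) * S = u ^ (n + 1) - 1 := mul_geom_sum u (n + 1)
  have hupow : u ^ (n + 1) = 1 - x * (y * S) := by
    have h1 : u ^ (n + 1) = (u - 1) * S + 1 := by rw [hgeom, sub_add_cancel]
    rw [h1, hu]
    noncomm_ring
  have hcn1 : c ^ (n + 1) = 0 := by rw [pow_succ, hn, zero_mul]
  have : x ^ (n + 1) * (1 - x * (y * S)) = 0 := by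
    rw [← hupow, ← key, hcn1]
  refine ⟨n + 1, Nat.succ_pos n, y * S, ?_⟩
  have hexp : x ^ (n + 1) - x ^ (n + 1 + 1) * (y * S) = 0 := by
    calc x ^ (n + 1) - x ^ (n + 1 + 1) * (y * S)
        = x ^ (n + 1) * (1 - x * (y * S)) := by
          rw [mul_sub, mul_one, pow_succ x (n + 1), mul_assoc]
      _ = 0 := this
  exact sub_eq_zero.mp hexp
end

section
/- For any nonzero ring R, the polynomial ring R[x] is not (m,n)-regularly nil clean for any positive integers m, n. Specifically, if e is an idempotent in x^m R[x] x^n with x^{m+n}(1-e) nilpotent, one derives a contradiction: any idempotent e ∈ x^{m+n} R[x] must be zero, but x^{m+n} is not nilpotent in R[x]. -/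
open Polynomial

theorem stmt_11 {R : Type*} [Ring R] [Nontrivial R] (m n : ℕ) (hm : 0 < m) (hn : 0 < n) :
    ¬ (∀ f : R[X], ∃ e r : R[X], e = f ^ m * r * f ^ n ∧ IsIdempotentElem e ∧
        IsNilpotent (f ^ m * (1 - e) * f ^ n)) := by
  intro h
  obtain ⟨e, r, he, hidem, hnil⟩ := h X
  set k := m + n with hk
  have hkpos : 0 < k := Nat.add_pos_left hm n
  -- X commutes with everything
  have hcomm : ∀ p : R[X], X ^ m * p = p * X ^ m := fun p =>
    ((Polynomial.commute_X p).pow_left m).eq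
  have he' : e = r * X ^ k := by
    rw [he, hcomm r, mul_assoc, ← pow_add]
  -- e = r^t * X^(t*k) for all t ≥ 1
  have hpow : ∀ t : ℕ, e = r ^ (t + 1) * X ^ ((t + 1) * k) := by
    intro t
    induction t with
    | zero => simpa using he'
    | succ t ih =>
      have : e = e * e := hidem.symm
      calc e = e * e := hidem.symm
        _ = (r ^ (t + 1) * X ^ ((t + 1) * k)) * (r * X ^ k) := by rw [← ih, ← he']
        _ = r ^ (t + 2) * X ^ ((t + 2) * k) := by
            have hx : X ^ ((t + 1) * k) * r = r * X ^ ((t + 1) * k) :=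
              ((Polynomial.commute_X r).pow_left _).eq
            rw [mul_assoc, ← mul_assoc (X ^ ((t + 1) * k)), hx, mul_assoc,
              ← pow_add, ← mul_assoc, ← pow_succ]
            ring_nf
  -- hence e = 0 by degree considerations
  have he0 : e = 0 := by
    by_contra h0
    have hdeg : ∀ t : ℕ, (t + 1) * k ≤ e.natDegree := by
      intro t
      have heq := hpow t
      have hr : r ^ (t + 1) ≠ 0 := by
        intro hr0
        apply h0
        rw [heq, hr0, zero_mul]
      calc (t + 1) * k ≤ (r ^ (t + 1)).natDegree + (t + 1) * k := Nat.le_add_left _ _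
        _ = (r ^ (t + 1) * X ^ ((t + 1) * k)).natDegree := by
            rw [← (monic_X_pow _).natDegree_mul_comm, (monic_X_pow _).natDegree_mul' hr, add_comm, natDegree_X_pow]
        _ = e.natDegree := by rw [← heq]
      -- done
    have := hdeg (e.natDegree + 1)
    have : (e.natDegree + 2) * k ≤ e.natDegree := by simpa using this
    nlinarith
  rw [he0, sub_zero, mul_one, ← pow_add] at hnil
  obtain ⟨j, hj⟩ := hnil
  rw [← pow_mul] at hj
  rcases Nat.eq_zero_or_pos j with hj0 | hj0
  · simp [hj0] at hj
  · have : (X : R[X]) ^ ((m + n) * j) ≠ 0 := (monic_X_pow _).ne_zero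
    exact this hj
end

section
/- The infinite direct product R = ∏_{n≥1} Z/2^n Z is not D-regularly nil clean: the element a = (0, 2, 2, 2, ...) admits no idempotent e ∈ aRa with a(1-e) nilpotent. -/
lemma aux_idem_nil {R : Type*} [MonoidWithZero R] {x : R}
    (hi : IsIdempotentElem x) (hn : IsNilpotent x) : x = 0 := by
  obtain ⟨k, hk⟩ := hn
  have : ∀ m, x ^ (m + 1) = x := by
    intro m
    induction m with
    | zero => simp
    | succ n ih => rw [pow_succ, ih, hi]
  calc x = x ^ (k + 1) := (this k).symm
    _ = x ^ k * x := pow_succ x k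
    _ = 0 := by rw [hk, zero_mul]

theorem stmt_16 :
    ¬ ∃ e r : (∀ n : ℕ, ZMod (2 ^ (n + 1))),
      e = (fun n => (2 : ZMod (2 ^ (n + 1)))) * r * (fun n => (2 : ZMod (2 ^ (n + 1)))) ∧
      IsIdempotentElem e ∧
      IsNilpotent ((fun n => (2 : ZMod (2 ^ (n + 1)))) * (1 - e)) := by
  rintro ⟨e, r, he, hid, hnil⟩
  -- each component of e is idempotent and nilpotent, hence zero
  have he0 : e = 0 := by
    funext n
    have hidn : IsIdempotentElem (e n) := congrFun hid n
    have hen : e n = 2 * r n * 2 := congrFun he n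
    have h2nil : IsNilpotent (e n) := by
      refine ⟨n + 1, ?_⟩
      have : (2 : ZMod (2 ^ (n + 1))) ^ (n + 1) = 0 := by
        have : ((2 ^ (n + 1) : ℕ) : ZMod (2 ^ (n + 1))) = 0 := ZMod.natCast_self _
        exact_mod_cast this
      rw [hen]
      rw [mul_pow, mul_pow, this, mul_zero]
    exact aux_idem_nil hidn h2nil
  rw [he0, sub_zero, mul_one] at hnil
  obtain ⟨k, hk⟩ := hnil
  have hk' : (2 : ZMod (2 ^ (k + 1))) ^ k = 0 := congrFun hk k
  have : ((2 ^ k : ℕ) : ZMod (2 ^ (k + 1))) = 0 := by push_cast; simpa using hk'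
  rw [ZMod.natCast_eq_zero_iff] at this
  have := Nat.le_of_dvd (by positivity) this
  have : 2 ^ (k + 1) ≤ 2 ^ k := this
  omega
end

section
/- Let R be an NI ring (nilpotent elements form an ideal). Then R is regularly nil clean if and only if R is D-regularly nil clean. In particular, if for a ∈ R there is an idempotent e ∈ aRa with a(1-e)a nilpotent, then a(1-e) is nilpotent. -/
theorem stmt_17 {R : Type*} [Ring R]
    (hNI : ∃ I : TwoSidedIdeal R, ∀ x : R, x ∈ I ↔ IsNilpotent x) :
    ((∀ a : R, ∃ e r : R, e = r * a ∧ IsIdempotentElem e ∧ IsNilpotent ((1 - e) * a)) ↔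
      (∀ a : R, ∃ e r : R, e = a * r * a ∧ IsIdempotentElem e ∧ IsNilpotent (a * (1 - e)))) ∧
    (∀ a e r : R, e = a * r * a → IsIdempotentElem e → IsNilpotent (a * (1 - e) * a) →
      IsNilpotent (a * (1 - e))) := by
  obtain ⟨I, hI⟩ := hNI
  -- auxiliary: (x*y)^(n+1) = x * (y*x)^n * y
  have hpow : ∀ (x y : R) (n : ℕ), (x * y) ^ (n + 1) = x * (y * x) ^ n * y := by
    intro x y n
    induction n with
    | zero => simp
    | succ n ih => rw [pow_succ, ih, pow_succ]; simp [mul_assoc]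
  have swap : ∀ x y : R, IsNilpotent (x * y) → IsNilpotent (y * x) := by
    rintro x y ⟨n, hn⟩
    exact ⟨n + 1, by rw [hpow y x n, hn, mul_zero, zero_mul]⟩
  -- quotient ring
  set c := I.ringCon with hc
  let π : R →+* c.Quotient := RingCon.mk' c
  have hker : ∀ x : R, π x = 0 ↔ IsNilpotent x := by
    intro x
    rw [← hI]
    show (x : c.Quotient) = 0 ↔ _
    rw [show (0 : c.Quotient) = ((0 : R) : c.Quotient) from rfl, c.eq]
    exact (TwoSidedIdeal.mem_iff I x).symm
  have hsurj : Function.Surjective π := by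
    intro z
    induction z using Quotient.ind with
    | _ x => exact ⟨x, rfl⟩
  have hred : ∀ z : c.Quotient, IsNilpotent z → z = 0 := by
    rintro z ⟨m, hm⟩
    obtain ⟨x, rfl⟩ := hsurj z
    rw [hker]
    have h1 : π (x ^ m) = 0 := by rw [map_pow]; exact hm
    obtain ⟨l, hl⟩ := (hker _).mp h1
    exact ⟨m * l, by rw [pow_mul]; exact hl⟩
  have L1 : ∀ x y : c.Quotient, x * y = 0 → y * x = 0 := by
    intro x y h
    apply hred
    refine ⟨2, ?_⟩
    rw [sq, show y * x * (y * x) = y * (x * y) * x from by simp [mul_assoc], h]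
    simp
  have Lcen : ∀ u : c.Quotient, u * u = u → ∀ x : c.Quotient, u * x = x * u := by
    intro u hu x
    have h1u : (1 - u) * u = 0 := by rw [sub_mul, one_mul, hu, sub_self]
    have hu1 : u * (1 - u) = 0 := by rw [mul_sub, mul_one, hu, sub_self]
    have h1 : u * x * (1 - u) = 0 := by
      apply hred
      refine ⟨2, ?_⟩
      rw [sq, show u * x * (1 - u) * (u * x * (1 - u)) = u * x * ((1 - u) * u) * (x * (1 - u))
        from by simp [mul_assoc], h1u]
      simp
    have h2 : (1 - u) * x * u = 0 := by
      apply hred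
      refine ⟨2, ?_⟩
      rw [sq, show (1 - u) * x * u * ((1 - u) * x * u) = (1 - u) * x * (u * (1 - u)) * (x * u)
        from by simp [mul_assoc], hu1]
      simp
    have e1 : u * x = u * x * u := by
      rw [mul_sub, mul_one] at h1
      exact (sub_eq_zero.mp h1)
    have e2 : x * u = u * x * u := by
      rw [sub_mul, one_mul, sub_mul] at h2
      exact sub_eq_zero.mp h2
    rw [e1, ← e2]
  -- Part 2 (works for any e)
  have part2 : ∀ a e r : R, e = a * r * a → IsIdempotentElem e → IsNilpotent (a * (1 - e) * a) →
      IsNilpotent (a * (1 - e)) := by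
    intro a e _ _ _ hnil
    have hmem : (1 - e) * (a * (1 - e) * a) ∈ I := I.mul_mem_left _ _ ((hI _).mpr hnil)
    have hsq : IsNilpotent (((1 - e) * a) ^ 2) := by
      rw [show ((1 - e) * a) ^ 2 = (1 - e) * (a * (1 - e) * a) from by rw [sq]; simp [mul_assoc]]
      exact (hI _).mp hmem
    obtain ⟨k, hk⟩ := hsq
    exact swap _ _ ⟨2 * k, by rw [pow_mul]; exact hk⟩
  refine ⟨⟨?_, ?_⟩, part2⟩
  · -- forward direction
    intro hL a
    obtain ⟨e, r, hera, hee, hnil⟩ := hL a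
    have hrae : π r * π a = π e := by rw [← map_mul, ← hera]
    have hEidem : π e * π e = π e := by rw [← map_mul, hee.eq]
    have hAE : π a * π e = π a := by
      have h0 : π (a * (1 - e)) = 0 := (hker _).mpr (swap _ _ hnil)
      rw [map_mul, map_sub, map_one, mul_sub, mul_one] at h0
      exact (sub_eq_zero.mp h0).symm
    have hFidem : (π a * π r) * (π a * π r) = π a * π r := by
      rw [show (π a * π r) * (π a * π r) = π a * (π r * π a) * π r from by simp [mul_assoc],
        hrae, hAE]
    set g := a * (r * r) * a with hgdef
    have hπg : π g = (π a * π r) * π e := by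
      rw [hgdef, map_mul, map_mul, map_mul, ← hrae]
      simp [mul_assoc]
    have hGidem : π g * π g = π g := by
      rw [hπg]
      calc ((π a * π r) * π e) * ((π a * π r) * π e)
          = (π a * π r) * ((π e * (π a * π r)) * π e) := by simp [mul_assoc]
        _ = (π a * π r) * (((π a * π r) * π e) * π e) := by rw [Lcen _ hEidem (π a * π r)]
        _ = ((π a * π r) * (π a * π r)) * (π e * π e) := by simp [mul_assoc]
        _ = (π a * π r) * π e := by rw [hFidem, hEidem]
    have hAg : π a * π g = π a := by
      rw [hπg]
      calc π a * ((π a * π r) * π e)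
          = (π a * (π a * π r)) * π e := by simp [mul_assoc]
        _ = ((π a * π r) * π a) * π e := by rw [← Lcen _ hFidem (π a)]
        _ = (π a * (π r * π a)) * π e := by simp [mul_assoc]
        _ = (π a * π e) * π e := by rw [hrae]
        _ = π a := by rw [mul_assoc, hEidem, hAE]
    -- lifting the idempotent
    obtain ⟨m, hm⟩ := (hker (g * g - g)).mp (by rw [map_sub, map_mul, hGidem, sub_self])
    have htM : (g * g - g) ^ (m + 2) = 0 := by rw [pow_add, hm, zero_mul]
    have hcomm : Commute g (1 - g) := (Commute.one_right g).sub_right (Commute.refl g)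
    set M := m + 2 with hM
    have h1 : (1 : R) = ∑ k ∈ Finset.range (2 * M + 1),
        g ^ k * (1 - g) ^ (2 * M - k) * ((2 * M).choose k : R) := by
      have h := hcomm.add_pow (2 * M)
      rw [show g + (1 - g) = 1 from by abel, one_pow] at h
      exact h
    set f : ℕ → R := fun k => g ^ k * (1 - g) ^ (2 * M - k) * ((2 * M).choose k : R) with hf
    set Y := ∑ k ∈ Finset.Ico 0 M, f k with hYdef
    set X := ∑ k ∈ Finset.Ico M (2 * M + 1), f k with hXdef
    have hYX : Y + X = 1 := by
      rw [hYdef, hXdef, Finset.sum_Ico_consecutive f (Nat.zero_le M) (by omega),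
        Nat.Ico_zero_eq_range]
      exact h1.symm
    set AX := ∑ k ∈ Finset.Ico M (2 * M + 1),
      g ^ (k - M) * (1 - g) ^ (2 * M - k) * ((2 * M).choose k : R) with hAXdef
    set BY := ∑ k ∈ Finset.Ico 0 M,
      g ^ k * (1 - g) ^ (2 * M - k - M) * ((2 * M).choose k : R) with hBYdef
    have hX1 : X = g ^ M * AX := by
      rw [hXdef, hAXdef, Finset.mul_sum]
      refine Finset.sum_congr rfl fun k hk => ?_
      have hMk : M ≤ k := (Finset.mem_Ico.mp hk).1
      simp only [hf]
      rw [← pow_mul_pow_sub g hMk]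
      simp [mul_assoc]
    have hY1 : Y = (1 - g) ^ M * BY := by
      rw [hYdef, hBYdef, Finset.mul_sum]
      refine Finset.sum_congr rfl fun k hk => ?_
      have hkM : k < M := (Finset.mem_Ico.mp hk).2
      have hk2 : M ≤ 2 * M - k := by omega
      simp only [hf]
      rw [← pow_mul_pow_sub (1 - g) hk2, ← mul_assoc, ← mul_assoc,
        (hcomm.pow_pow k M).eq]
      simp [mul_assoc]
    have hgAX : Commute g AX := by
      rw [hAXdef]
      refine Commute.sum_right _ _ _ fun k _ => ?_
      exact (((Commute.refl g).pow_right _).mul_right (hcomm.pow_right _)).mul_right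
        ((Nat.cast_commute _ g).symm)
    have h1gAX : Commute ((1 - g) ^ M) AX :=
      (((Commute.one_left AX).sub_left hgAX).pow_left M)
    -- key zero product
    have hkey : g ^ M * (1 - g) ^ M = 0 := by
      rw [← hcomm.mul_pow, show g * (1 - g) = -(g * g - g) from by
        rw [mul_sub, mul_one]; abel, neg_pow, hM, htM, mul_zero]
    have hXY : X * Y = 0 := by
      calc X * Y = g ^ M * (AX * (1 - g) ^ M) * BY := by rw [hX1, hY1]; simp [mul_assoc]
        _ = g ^ M * ((1 - g) ^ M * AX) * BY := by rw [h1gAX.symm.eq]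
        _ = (g ^ M * (1 - g) ^ M) * (AX * BY) := by simp [mul_assoc]
        _ = 0 := by rw [hkey, zero_mul]
    have hXidem : IsIdempotentElem X := by
      have h := congrArg (fun z => X * z) hYX
      simp only [mul_add, mul_one] at h
      rw [hXY, zero_add] at h
      exact h
    -- π X = π g
    have hπX : π X = π g := by
      have hGi : IsIdempotentElem (π g) := hGidem
      have hp1 : (π g) ^ (m + 2) = π g := hGi.pow_succ_eq (m + 1)
      have hp2 : (1 - π g) ^ (m + 2) = 1 - π g := hGi.one_sub.pow_succ_eq (m + 1)
      have hπX1 : π X = π g * π AX := by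
        rw [hX1, map_mul, map_pow, hM, hp1]
      have hπY1 : π Y = (1 - π g) * π BY := by
        rw [hY1, map_mul, map_pow, map_sub, map_one, hM, hp2]
      have hsum : π Y + π X = 1 := by rw [← map_add, hYX, map_one]
      have hgY : π g * π Y = 0 := by
        rw [hπY1, ← mul_assoc, mul_sub, mul_one, hGidem, sub_self, zero_mul]
      have hgX : π g * π X = π X := by
        rw [hπX1, ← mul_assoc, hGidem]
      calc π X = π g * π X := hgX.symm
        _ = π g * π Y + π g * π X := by rw [hgY, zero_add]
        _ = π g * (π Y + π X) := by rw [mul_add]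
        _ = π g := by rw [hsum, mul_one]
    -- X ∈ aRa
    have hXfac : X = g * (g ^ m * AX) * g := by
      rw [hX1, hM, pow_succ, mul_assoc (g ^ (m + 1)) g AX, hgAX.eq, pow_succ']
      simp [mul_assoc]
    refine ⟨X, r * r * a * (g ^ m * AX) * a * (r * r), ?_, hXidem, ?_⟩
    · rw [hXfac]
      rw [hgdef]
      simp [mul_assoc]
    · rw [mul_one_sub]
      rw [← hker]
      rw [map_sub, map_mul, hπX, hAg, sub_self]
  · -- easy direction
    intro hD a
    obtain ⟨e, r, hera, hee, hnil⟩ := hD a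
    exact ⟨e, a * r, hera, hee, swap _ _ hnil⟩
end

section
/- Let R be an abelian ring (all idempotents central). Then R is regularly nil clean if and only if R is D-regularly nil clean. Key step: if e is a central idempotent with a(1-e)a nilpotent, then (a(1-e))^2 = a(1-e)a(1-e) is nilpotent, hence a(1-e) is nilpotent. -/
theorem stmt_18 {R : Type*} [Ring R]
    (hab : ∀ e : R, IsIdempotentElem e → ∀ x : R, e * x = x * e) :
    ((∀ a : R, ∃ e r : R, e = r * a ∧ IsIdempotentElem e ∧ IsNilpotent ((1 - e) * a)) ↔
      (∀ a : R, ∃ e r : R, e = a * r * a ∧ IsIdempotentElem e ∧ IsNilpotent (a * (1 - e)))) ∧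
    (∀ a e : R, IsIdempotentElem e → IsNilpotent (a * (1 - e) * a) →
      IsNilpotent (a * (1 - e))) := by
  constructor
  · constructor
    · rintro h a
      obtain ⟨e, r, he, hid, hnil⟩ := h a
      have hc : ∀ x : R, e * x = x * e := hab e hid
      have hea : ∀ x : R, e * (a * x) = a * (e * x) := by
        intro x; rw [← mul_assoc, hc a, mul_assoc]
      have her : ∀ x : R, e * (r * x) = r * (e * x) := by
        intro x; rw [← mul_assoc, hc r, mul_assoc]
      have hra : ∀ x : R, r * (a * x) = e * x := by
        intro x; rw [← mul_assoc, ← he]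
      have hee2 : e * e = e := hid
      have hee : ∀ x : R, e * (e * x) = e * x := by
        intro x; rw [← mul_assoc, hid]
      have hkey : a * (r * r) * a = a * (r * e) := by
        rw [he]; simp only [mul_assoc]
      have hidem : IsIdempotentElem (a * (r * r) * a) := by
        unfold IsIdempotentElem
        rw [hkey]
        simp only [mul_assoc]
        simp only [hea, her, hra, hee, hee2]
      refine ⟨a * (r * r) * a, r * r, rfl, hidem, ?_⟩
      -- the new idempotent is central, and a * e' = a * e, so a*(1-e') = (1-e)*a
      have hc' : ∀ x : R, (a * (r * r) * a) * x = x * (a * (r * r) * a) :=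
        hab _ hidem
      have hae : a * (a * (r * r) * a) = a * e := by
        rw [← hc' a, hkey]
        simp only [mul_assoc, hc a, hra, hee, hee2]
      have : a * (1 - a * (r * r) * a) = (1 - e) * a := by
        rw [mul_sub, mul_one, hae, sub_mul, one_mul, hc a]
      rw [this]; exact hnil
    · rintro h a
      obtain ⟨e, r, he, hid, hnil⟩ := h a
      refine ⟨e, a * r, by rw [he, mul_assoc], hid, ?_⟩
      have : (1 - e) * a = a * (1 - e) := by
        rw [sub_mul, mul_sub, one_mul, mul_one, hab e hid a]
      rw [this]; exact hnil
  · intro a e hid hn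
    have hc : ∀ x : R, (1 - e) * x = x * (1 - e) := by
      intro x; rw [sub_mul, mul_sub, one_mul, mul_one, hab e hid x]
    obtain ⟨n, hn⟩ := hn
    refine ⟨2 * n, ?_⟩
    have hsq : (a * (1 - e)) ^ 2 = (a * (1 - e) * a) * (1 - e) := by
      rw [sq]; simp only [mul_assoc]
    have hcomm : Commute (a * (1 - e) * a) (1 - e) := (hc _).symm
    rw [pow_mul, hsq, hcomm.mul_pow, hn, zero_mul]
end

section
/- Let A be the 2×2 integer matrix with rows (1, -1) and (3, -3), and B the matrix with rows (1, 0) and (0, 0). Then A = A B A (so A is regular), A^n = (-2)^{n-1} A for all n ≥ 1, A is not nilpotent, and there exists no idempotent E ∈ A · M₂(Z) · A with A(I - E) nilpotent; that is, A is a regular element of M₂(Z) that is not D-regularly nil clean. -/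
theorem stmt_19 :
    let A : Matrix (Fin 2) (Fin 2) ℤ := !![1, -1; 3, -3]
    let B : Matrix (Fin 2) (Fin 2) ℤ := !![1, 0; 0, 0]
    A = A * B * A ∧
    (∀ n : ℕ, 1 ≤ n → A ^ n = (-2 : ℤ) ^ (n - 1) • A) ∧
    ¬ IsNilpotent A ∧
    ¬ ∃ E r : Matrix (Fin 2) (Fin 2) ℤ, E = A * r * A ∧ IsIdempotentElem E ∧
        IsNilpotent (A * (1 - E)) := by
  intro A B
  have hA2 : A * A = (-2 : ℤ) • A := by
    ext i j; fin_cases i <;> fin_cases j <;>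
      simp [A, Matrix.mul_apply, Fin.sum_univ_two]
  have hpow : ∀ n : ℕ, 1 ≤ n → A ^ n = (-2 : ℤ) ^ (n - 1) • A := by
    intro n hn
    induction n with
    | zero => omega
    | succ m ih =>
      rcases Nat.eq_or_lt_of_le hn with h | h
      · simp [← h]
      · have hm : 1 ≤ m := by omega
        rw [pow_succ, ih hm, Matrix.smul_mul, hA2, smul_smul]
        have : m + 1 - 1 = (m - 1) + 1 := by omega
        rw [this, pow_succ]
  have hnil : ¬ IsNilpotent A := by
    rintro ⟨n, hn⟩
    have hn1 : 1 ≤ n := by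
      rcases Nat.eq_zero_or_pos n with h | h
      · exfalso
        rw [h, pow_zero] at hn
        have := congrArg (fun M => M 0 0) hn
        simp [Matrix.one_apply] at this
      · exact h
    rw [hpow n hn1] at hn
    have := congrArg (fun M => M 0 0) hn
    simp [A] at this
  refine ⟨?_, hpow, hnil, ?_⟩
  · ext i j; fin_cases i <;> fin_cases j <;>
      simp [A, B, Matrix.mul_apply, Fin.sum_univ_two]
  · rintro ⟨E, r, hE, hid, hNE⟩
    set h : ℤ := r 0 0 - r 1 0 + 3 * (r 0 1 - r 1 1) with hh
    have hEA : E = h • A := by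
      rw [hE]
      ext i j; fin_cases i <;> fin_cases j <;>
        simp [A, Matrix.mul_apply, Matrix.vecMul, dotProduct, Fin.sum_univ_two, hh] <;> ring
    have h0 : h = 0 := by
      have := hid
      rw [IsIdempotentElem, hEA, Matrix.smul_mul, Matrix.mul_smul, hA2,
        smul_smul, smul_smul] at this
      have h00 := congrArg (fun M => M 0 0) this
      simp [A] at h00
      nlinarith
    rw [hEA, h0, zero_smul, sub_zero, mul_one] at hNE
    exact hnil hNE
end
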